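/- The quasisymmetric divided difference operators satisfy ∂̃_i² = 0 and ∂̃_i ∂̃_j = ∂̃_j ∂̃_i for |i−j| > 1. -/

import Mathlib

open MvPolynomial

/-- Hivert's quasisymmetric swap on exponent vectors: exchange the exponents in
positions `i` and `i+1` if one of them is zero, otherwise do nothing. -/
noncomputable def tswapE (n i : ℕ) (hi : i + 1 < n) (β : Fin n →₀ ℕ) : Fin n →₀ ℕ :=
  if β ⟨i, by omega⟩ = 0 ∨ β ⟨i + 1, hi⟩ = 0 then
    β.equivMapDomain (Equiv.swap (⟨i, by omega⟩ : Fin n) ⟨i + 1, hi⟩)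
  else β

/-- Hivert's quasisymmetric action `s̃ᵢ` on polynomials, acting monomial-wise by
`s̃ᵢ(x^β) = x^(s̃ᵢ β)` and extended linearly. -/
noncomputable def stilde (n i : ℕ) (hi : i + 1 < n) (f : MvPolynomial (Fin n) ℂ) :
    MvPolynomial (Fin n) ℂ :=
  f.support.sum fun β => monomial (tswapE n i hi β) (coeff β f)

/-- `DRel n i hi f g` encodes `∂̃ᵢ f = g`, where
`∂̃ᵢ f = (f - s̃ᵢ f)/(xᵢ - xᵢ₊₁)`; the relation `(xᵢ - xᵢ₊₁) * g = f - s̃ᵢ f`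
determines `g` uniquely. -/
def DRel (n i : ℕ) (hi : i + 1 < n) (f g : MvPolynomial (Fin n) ℂ) : Prop :=
  (X ⟨i, by omega⟩ - X ⟨i + 1, hi⟩) * g = f - stilde n i hi f

/-! Write `D = X p - X q`, `s̃` for the quasisymmetric swap and `σ` for the transposition of
`p` and `q`. On exponents, `s̃` agrees with `σ` when the exponent at `p` or at `q` vanishes and is
the identity otherwise, so `σ` negates `f - s̃ f`. As `σ D = -D`, a solution `g` of
`D g = f - s̃ f` is `σ`-symmetric, hence `s̃`-invariant: `∂̃ g = 0`.

For disjoint pairs, `s̃'` commutes with `s̃` and with multiplication by `D`, so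
`D D' ∂̃' ∂̃ f = f - s̃ f - s̃' f + s̃' s̃ f` is symmetric in the two pairs; cancelling `D D'`
gives `∂̃' ∂̃ = ∂̃ ∂̃'`. -/

open Function Equiv

lemma X_sub_X_ne_zero {σ R : Type*} [CommRing R] [Nontrivial R] {p q : σ} (hpq : p ≠ q) :
    (X p - X q : MvPolynomial σ R) ≠ 0 :=
  sub_ne_zero.mpr fun e => hpq (X_injective e)

variable {σ : Type*} [DecidableEq σ]

noncomputable def quasiSwapExp (p q : σ) (β : σ →₀ ℕ) : σ →₀ ℕ :=
  if β p = 0 ∨ β q = 0 then β.equivMapDomain (swap p q) else β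

section Exponents

variable {p q r : σ} {β : σ →₀ ℕ}

lemma quasiSwapExp_of_eq_zero (h : β p = 0 ∨ β q = 0) :
    quasiSwapExp p q β = β.equivMapDomain (swap p q) := if_pos h

lemma quasiSwapExp_of_ne_zero (hp : β p ≠ 0) (hq : β q ≠ 0) : quasiSwapExp p q β = β :=
  if_neg (by tauto)

lemma quasiSwapExp_apply_of_ne (hp : r ≠ p) (hq : r ≠ q) : quasiSwapExp p q β r = β r := by
  unfold quasiSwapExp
  split_ifs <;> simp [swap_apply_of_ne_of_ne hp hq]

lemma quasiSwapExp_involutive (p q : σ) : Involutive (quasiSwapExp p q) := by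
  intro β
  by_cases h : β p = 0 ∨ β q = 0
  · have h' : (β.equivMapDomain (swap p q)) p = 0 ∨ (β.equivMapDomain (swap p q)) q = 0 := by
      simpa [or_comm] using h
    rw [quasiSwapExp_of_eq_zero h, quasiSwapExp_of_eq_zero h']
    ext r
    simp
  · obtain ⟨hp, hq⟩ := not_or.mp h
    rw [quasiSwapExp_of_ne_zero hp hq, quasiSwapExp_of_ne_zero hp hq]

lemma quasiSwapExp_comm {p' q' : σ} (h₁ : p ≠ p') (h₂ : p ≠ q') (h₃ : q ≠ p') (h₄ : q ≠ q')
    (β : σ →₀ ℕ) :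
    quasiSwapExp p q (quasiSwapExp p' q' β) = quasiSwapExp p' q' (quasiSwapExp p q β) := by
  conv_lhs => rw [quasiSwapExp, quasiSwapExp_apply_of_ne h₁ h₂, quasiSwapExp_apply_of_ne h₃ h₄]
  conv_rhs => rw [quasiSwapExp, quasiSwapExp_apply_of_ne h₁.symm h₃.symm,
    quasiSwapExp_apply_of_ne h₂.symm h₄.symm]
  unfold quasiSwapExp
  split_ifs
  all_goals try rfl
  rw [← Finsupp.equivMapDomain_trans, ← Finsupp.equivMapDomain_trans]
  congr 1
  ext r
  simp only [trans_apply, swap_apply_def]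
  split_ifs <;> simp_all

lemma quasiSwapExp_add_single (hp : r ≠ p) (hq : r ≠ q) (k : ℕ) :
    quasiSwapExp p q (β + Finsupp.single r k) = quasiSwapExp p q β + Finsupp.single r k := by
  have hsp : Finsupp.single r k p = 0 := Finsupp.single_eq_of_ne hp.symm
  have hsq : Finsupp.single r k q = 0 := Finsupp.single_eq_of_ne hq.symm
  unfold quasiSwapExp
  simp only [Finsupp.add_apply, hsp, hsq, add_zero]
  split_ifs
  · rw [Finsupp.equivMapDomain_eq_mapDomain, Finsupp.mapDomain_add,
      ← Finsupp.equivMapDomain_eq_mapDomain, ← Finsupp.equivMapDomain_eq_mapDomain,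
      Finsupp.equivMapDomain_single, swap_apply_of_ne_of_ne hp hq]
  · rfl

end Exponents

section CommSemiring

variable {R : Type*} [CommSemiring R]

noncomputable def quasiSwap (p q : σ) : MvPolynomial σ R ≃ₗ[R] MvPolynomial σ R :=
  AddMonoidAlgebra.mapDomainLinearEquiv R R ((quasiSwapExp_involutive p q).toPerm _)

variable {p q r : σ}

lemma coeff_quasiSwap (γ : σ →₀ ℕ) (f : MvPolynomial σ R) :
    coeff γ (quasiSwap p q f) = coeff (quasiSwapExp p q γ) f := by
  simp [quasiSwap, coeff]

lemma quasiSwap_monomial (β : σ →₀ ℕ) (c : R) :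
    quasiSwap p q (monomial β c) = monomial (quasiSwapExp p q β) c := by
  simp [quasiSwap, monomial]

lemma quasiSwap_comm {p' q' : σ} (h₁ : p ≠ p') (h₂ : p ≠ q') (h₃ : q ≠ p') (h₄ : q ≠ q')
    (f : MvPolynomial σ R) :
    quasiSwap p q (quasiSwap p' q' f) = quasiSwap p' q' (quasiSwap p q f) := by
  ext γ
  simp only [coeff_quasiSwap, quasiSwapExp_comm h₁ h₂ h₃ h₄]

lemma quasiSwap_X_mul (hp : r ≠ p) (hq : r ≠ q) (f : MvPolynomial σ R) :
    quasiSwap p q (X r * f) = X r * quasiSwap p q f := by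
  induction f using MvPolynomial.induction_on' with
  | monomial β c =>
    rw [X, monomial_mul, one_mul, quasiSwap_monomial, quasiSwap_monomial, monomial_mul, one_mul,
      add_comm, quasiSwapExp_add_single hp hq, add_comm]
  | add f g hf hg => rw [mul_add, map_add, hf, hg, map_add, mul_add]

lemma coeff_rename_swap (γ : σ →₀ ℕ) (f : MvPolynomial σ R) :
    coeff γ (rename (swap p q) f) = coeff (γ.equivMapDomain (swap p q)) f := by
  have hγ : γ = (γ.equivMapDomain (swap p q)).mapDomain (swap p q) := by
    rw [← Finsupp.equivMapDomain_eq_mapDomain]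
    ext r
    simp
  conv_lhs => rw [hγ]
  exact coeff_rename_mapDomain _ (swap p q).injective _ _

lemma quasiSwap_eq_self_of_rename_swap_eq_self {g : MvPolynomial σ R}
    (hg : rename (swap p q) g = g) : quasiSwap p q g = g := by
  ext γ
  rw [coeff_quasiSwap]
  by_cases h : γ p = 0 ∨ γ q = 0
  · rw [quasiSwapExp_of_eq_zero h, ← coeff_rename_swap, hg]
  · obtain ⟨hp, hq⟩ := not_or.mp h
    rw [quasiSwapExp_of_ne_zero hp hq]

end CommSemiring

section CommRing

variable {R : Type*} [CommRing R] {p q : σ}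

lemma rename_swap_sub_quasiSwap (f : MvPolynomial σ R) :
    rename (swap p q) (f - quasiSwap p q f) = quasiSwap p q f - f := by
  ext γ
  simp only [coeff_rename_swap, coeff_sub, coeff_quasiSwap]
  by_cases h : γ p = 0 ∨ γ q = 0
  · rw [← quasiSwapExp_of_eq_zero h, quasiSwapExp_involutive]
  · obtain ⟨hp, hq⟩ := not_or.mp h
    have hp' : γ.equivMapDomain (swap p q) p ≠ 0 := by simpa using hq
    have hq' : γ.equivMapDomain (swap p q) q ≠ 0 := by simpa using hp
    rw [quasiSwapExp_of_ne_zero hp' hq', quasiSwapExp_of_ne_zero hp hq, sub_self, sub_self]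

lemma quasiSwap_X_sub_X_mul {p' q' : σ} (h₁ : p ≠ p') (h₂ : p ≠ q') (h₃ : q ≠ p') (h₄ : q ≠ q')
    (f : MvPolynomial σ R) :
    quasiSwap p' q' ((X p - X q) * f) = (X p - X q) * quasiSwap p' q' f := by
  rw [sub_mul, map_sub, quasiSwap_X_mul h₁ h₂, quasiSwap_X_mul h₃ h₄, sub_mul]

def IsQuasiDivDiff (p q : σ) (f g : MvPolynomial σ R) : Prop :=
  (X p - X q) * g = f - quasiSwap p q f

namespace IsQuasiDivDiff

variable {f g h : MvPolynomial σ R}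

lemma X_sub_X_mul_X_sub_X_mul {p' q' : σ} (h₁ : p ≠ p') (h₂ : p ≠ q') (h₃ : q ≠ p') (h₄ : q ≠ q')
    (hfg : IsQuasiDivDiff p q f g) (hgh : IsQuasiDivDiff p' q' g h) :
    (X p - X q) * ((X p' - X q') * h) =
      f - quasiSwap p q f - quasiSwap p' q' (f - quasiSwap p q f) := by
  rw [hgh, mul_sub, ← quasiSwap_X_sub_X_mul h₁ h₂ h₃ h₄, hfg]

variable [IsDomain R]

lemma quasiSwap_eq_self (hpq : p ≠ q) (hfg : IsQuasiDivDiff p q f g) : quasiSwap p q g = g := by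
  refine quasiSwap_eq_self_of_rename_swap_eq_self (mul_left_cancel₀ (X_sub_X_ne_zero hpq) ?_)
  rw [IsQuasiDivDiff] at hfg
  have hσ := congrArg (rename (swap p q)) hfg
  rw [map_mul, rename_swap_sub_quasiSwap, map_sub, rename_X, rename_X, swap_apply_left,
    swap_apply_right] at hσ
  linear_combination -hσ - hfg

lemma eq_zero (hpq : p ≠ q) (hfg : IsQuasiDivDiff p q f g) (hgh : IsQuasiDivDiff p q g h) :
    h = 0 := by
  have hD : (X p - X q) * h = 0 := by rw [hgh, hfg.quasiSwap_eq_self hpq, sub_self]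
  exact (mul_eq_zero.mp hD).resolve_left (X_sub_X_ne_zero hpq)

lemma comm {p' q' : σ} {a b a' b' : MvPolynomial σ R} (hpq : p ≠ q) (hpq' : p' ≠ q')
    (h₁ : p ≠ p') (h₂ : p ≠ q') (h₃ : q ≠ p') (h₄ : q ≠ q')
    (ha : IsQuasiDivDiff p q f a) (hb : IsQuasiDivDiff p' q' a b)
    (ha' : IsQuasiDivDiff p' q' f a') (hb' : IsQuasiDivDiff p q a' b') : b = b' := by
  refine mul_left_cancel₀ (mul_ne_zero (X_sub_X_ne_zero hpq) (X_sub_X_ne_zero hpq')) ?_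
  rw [mul_assoc, ha.X_sub_X_mul_X_sub_X_mul h₁ h₂ h₃ h₄ hb, mul_comm (X p - X q), mul_assoc,
    ha'.X_sub_X_mul_X_sub_X_mul h₁.symm h₃.symm h₂.symm h₄.symm hb', map_sub, map_sub,
    quasiSwap_comm h₁ h₂ h₃ h₄]
  abel

end IsQuasiDivDiff

end CommRing

lemma stilde_eq_quasiSwap {n i : ℕ} (hi : i + 1 < n) (f : MvPolynomial (Fin n) ℂ) :
    stilde n i hi f = quasiSwap ⟨i, by omega⟩ ⟨i + 1, hi⟩ f := by
  conv_rhs => rw [← support_sum_monomial_coeff f]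
  simp only [stilde, map_sum, quasiSwap_monomial]
  rfl

lemma dRel_iff {n i : ℕ} (hi : i + 1 < n) (f g : MvPolynomial (Fin n) ℂ) :
    DRel n i hi f g ↔ IsQuasiDivDiff (⟨i, by omega⟩ : Fin n) ⟨i + 1, hi⟩ f g := by
  rw [DRel, IsQuasiDivDiff, stilde_eq_quasiSwap]

/-- The quasisymmetric divided difference operators satisfy
`∂̃ᵢ² = 0` and `∂̃ᵢ ∂̃ⱼ = ∂̃ⱼ ∂̃ᵢ` for `|i−j| > 1`. -/
theorem dtilde_squared_zero_and_commute (n : ℕ) :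
    (∀ (i : ℕ) (hi : i + 1 < n) (f g h : MvPolynomial (Fin n) ℂ),
      DRel n i hi f g → DRel n i hi g h → h = 0) ∧
    (∀ (i j : ℕ) (hi : i + 1 < n) (hj : j + 1 < n), (i + 1 < j ∨ j + 1 < i) →
      ∀ f a b a' b' : MvPolynomial (Fin n) ℂ,
      DRel n i hi f a → DRel n j hj a b →
      DRel n j hj f a' → DRel n i hi a' b' →
      b = b') := by
  refine ⟨fun i hi f g h hfg hgh => ?_, fun i j hi hj hij f a b a' b' ha hb ha' hb' => ?_⟩
  · rw [dRel_iff] at hfg hgh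
    exact hfg.eq_zero (by simp) hgh
  · rw [dRel_iff] at ha hb ha' hb'
    exact ha.comm (by simp) (by simp) (by simp; omega) (by simp; omega) (by simp; omega)
      (by simp; omega) hb ha' hb'
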